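/- Let w ≥ 4, assume a_{w-1} = 1, and let 0 ≤ s < t be integers with 2^t ≤ w−2. Then the number of pairs of row vectors (u, v) ∈ F₂^w × F₂^w such that u·B^{2^k} + v·Q_{2^k} = 0 for every integer k with s ≤ k ≤ t equals 2^{w − (2^t − 2^s)}. (Hence, if (u, v) is uniformly distributed on F₂^w × F₂^w, the probability that all these equations hold is 2^{−w}·2^{−(2^t − 2^s)}.) -/

import Mathlib

/-!
Since `Q_{2N} = Q_N B^N + B^N Q_N`, once the equation for `N = 2^k` holds, the one for `2N` is
equivalent to `(v B^N) Q_N = 0`; and `x Q_N = Σ_{i<N} (x B^i)₀ e_{N-i}`. So the system amounts to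
the equation for `n = 2^s` together with the `d = 2^t - 2^s` conditions `(v B^m)₀ = 0`,
`n ≤ m < 2^t`. These `w + d` linear forms in `(u, v)` are independent: `B` shifts `e_i` to
`e_{i+1}` for `1 ≤ i ≤ w - 2`, so `e_{w-m}` first reaches coordinate `0` after exactly `m` steps
(where `a_{w-1} = 1` is used), making the outputs `(v B^m)₀` triangular in `v`, while `B^n` sends
`e_p` to `e_{p+n}` and `e_{w-n}` to the last row of `B`. The solution space therefore has
dimension `2w - (w + d)`.
-/

open Matrix

/-- The matrix `B` of MT-type recursions: first row zero, row `i` (0-indexed,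
`1 ≤ i ≤ w-2`) is the standard basis row vector with a `1` in column `i+1`,
and the last row is `(a_{w-1}, …, a_0)` (stored as `a 0, …, a (w-1)`). -/
def mtB (w : ℕ) (a : Fin w → ZMod 2) : Matrix (Fin w) (Fin w) (ZMod 2) :=
  Matrix.of fun i j =>
    if (i : ℕ) = w - 1 then a j
    else if 1 ≤ (i : ℕ) ∧ (j : ℕ) = (i : ℕ) + 1 then 1 else 0

/-- The matrix `C`: its only nonzero entry is a `1` in position `(1,2)` (1-indexed). -/
def mtC (w : ℕ) : Matrix (Fin w) (Fin w) (ZMod 2) :=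
  Matrix.of fun i j => if (i : ℕ) = 0 ∧ (j : ℕ) = 1 then 1 else 0

/-- `Q_k = Σ_{i=0}^{k-1} B^i · C · B^{k-1-i}`. -/
def mtQ (w : ℕ) (a : Fin w → ZMod 2) (k : ℕ) : Matrix (Fin w) (Fin w) (ZMod 2) :=
  ∑ i ∈ Finset.range k, (mtB w a) ^ i * mtC w * (mtB w a) ^ (k - 1 - i)

open Finset Module

theorem LinearMap.natCard_ker_of_surjective {K V W : Type*} [DivisionRing K] [Fintype K]
    [AddCommGroup V] [Module K V] [Fintype V] [AddCommGroup W] [Module K W] [Fintype W]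
    (f : V →ₗ[K] W) (hf : Function.Surjective f) :
    Nat.card (LinearMap.ker f) = Fintype.card K ^ (finrank K V - finrank K W) := by
  classical
  have hrank := f.finrank_range_add_finrank_ker
  rw [LinearMap.range_eq_top.mpr hf, finrank_top] at hrank
  rw [Nat.card_eq_fintype_card, Module.card_eq_pow_finrank (K := K)]
  congr 1
  omega

theorem exists_forall_lt_apply_eq_of_triangular {R V : Type*} [Ring R] [AddCommGroup V]
    [Module R V] (L : V →ₗ[R] ℕ → R) (T : ℕ)
    (hL : ∀ m < T, ∃ x, L x m = 1 ∧ ∀ k < m, L x k = 0) (φ : ℕ → R) :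
    ∃ v, ∀ k < T, L v k = φ k := by
  induction T with
  | zero => exact ⟨0, by simp⟩
  | succ T ih =>
    obtain ⟨v, hv⟩ := ih fun m hm => hL m (by omega)
    obtain ⟨x, hxT, hx⟩ := hL T (by omega)
    refine ⟨v + (φ T - L v T) • x, fun k hk => ?_⟩
    rcases Nat.lt_succ_iff_lt_or_eq.mp hk with hk | rfl
    · simp [hv k hk, hx k hk]
    · simp [hxT]

theorem sum_range_pow_mul_mul_pow_add {A : Type*} [Semiring A] (b c : A) (m n : ℕ) :
    ∑ i ∈ range (m + n), b ^ i * c * b ^ (m + n - 1 - i) =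
      (∑ i ∈ range m, b ^ i * c * b ^ (m - 1 - i)) * b ^ n +
        b ^ m * ∑ i ∈ range n, b ^ i * c * b ^ (n - 1 - i) := by
  rw [sum_range_add, sum_mul, mul_sum]
  congr 1
  · refine sum_congr rfl fun i hi => ?_
    rw [mul_assoc _ _ (b ^ n), ← pow_add]
    congr 2
    have := mem_range.mp hi
    omega
  · refine sum_congr rfl fun i hi => ?_
    rw [pow_add, ← mul_assoc, ← mul_assoc]
    congr 2
    have := mem_range.mp hi
    omega

theorem forall_le_le_iff_of_step {E Z : ℕ → Prop} {f : ℕ → ℕ} (hf : Monotone f) {s t : ℕ}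
    (hst : s ≤ t)
    (hstep : ∀ k, s ≤ k → k < t → E k → (E (k + 1) ↔ ∀ m, f k ≤ m → m < f (k + 1) → Z m)) :
    (∀ k, s ≤ k → k ≤ t → E k) ↔ E s ∧ ∀ m, f s ≤ m → m < f t → Z m := by
  induction t, hst using Nat.le_induction with
  | base =>
    exact ⟨fun h => ⟨h s le_rfl le_rfl, fun m h1 h2 => absurd h2 (not_lt.mpr h1)⟩,
      fun h k h1 h2 => le_antisymm h2 h1 ▸ h.1⟩
  | succ t hst ih =>
    have ih := ih fun k hk hkt => hstep k hk (by omega)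
    have hft := hf (by omega : t ≤ t + 1)
    have hfst := hf hst
    constructor
    · intro h
      have hE := ih.mp fun k hk hkt => h k hk (by omega)
      have hZ := (hstep t hst (by omega) (h t hst (by omega))).mp (h (t + 1) (by omega) le_rfl)
      refine ⟨hE.1, fun m h1 h2 => ?_⟩
      rcases lt_or_ge m (f t) with hm | hm
      · exact hE.2 m h1 hm
      · exact hZ m hm h2
    · rintro ⟨hEs, hZ⟩ k hk hkt
      have hle := ih.mpr ⟨hEs, fun m h1 h2 => hZ m h1 (by omega)⟩
      rcases eq_or_lt_of_le hkt with rfl | hkt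
      · exact (hstep t hst (by omega) (hle t hst le_rfl)).mpr fun m h1 h2 => hZ m (by omega) h2
      · exact hle k hk (by omega)

section
variable {w : ℕ} {a : Fin w → ZMod 2}

theorem mtB_row_eq_single {i : ℕ} (hi : 1 ≤ i) (hiw : i + 1 < w) :
    mtB w a ⟨i, by omega⟩ = Pi.single ⟨i + 1, hiw⟩ 1 := by
  ext j
  have hne : i ≠ w - 1 := by omega
  simp [mtB, hne, hi, Pi.single_apply, Fin.ext_iff]

theorem mtB_row_last (hw : 0 < w) : mtB w a ⟨w - 1, by omega⟩ = a := by
  ext j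
  simp [mtB]

theorem mtB_pow_row_add {i k m : ℕ} (hi : 1 ≤ i) (h : i + k < w) :
    (mtB w a ^ (k + m)) ⟨i, by omega⟩ = (mtB w a ^ m) ⟨i + k, h⟩ := by
  induction k generalizing i with
  | zero => simp
  | succ k ih =>
    rw [show k + 1 + m = k + m + 1 by ring, pow_succ', mul_apply_eq_vecMul,
      mtB_row_eq_single hi (by omega), single_one_vecMul, row, ih (by omega) (by omega)]
    simp only [add_assoc, add_comm 1 k]

theorem mtB_pow_row_eq_single {i m : ℕ} (hi : 1 ≤ i) (h : i + m < w) :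
    (mtB w a ^ m) ⟨i, by omega⟩ = Pi.single ⟨i + m, h⟩ 1 := by
  have hrow := mtB_pow_row_add (a := a) (m := 0) hi h
  simp only [add_zero, pow_zero] at hrow
  rw [hrow]
  ext j
  simp [one_apply, Pi.single_apply, eq_comm]

theorem mtB_pow_row_sub {m : ℕ} (hm : 1 ≤ m) (hmw : m < w) :
    (mtB w a ^ m) ⟨w - m, by omega⟩ = a := by
  have hrow := mtB_pow_row_add (a := a) (k := m - 1) (m := 1) (i := w - m) (by omega) (by omega)
  rw [Nat.sub_add_cancel hm, pow_one] at hrow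
  rw [hrow]
  convert mtB_row_last (a := a) (by omega) using 2
  simp only [Fin.mk.injEq]
  omega

theorem vecMul_mtC [NeZero w] (hw : 1 < w) (x : Fin w → ZMod 2) :
    x ᵥ* mtC w = Pi.single ⟨1, hw⟩ (x 0) := by
  ext j
  rw [vecMul, dotProduct, sum_eq_single 0 (fun i _ hi => by simp [mtC, hi]) (by simp)]
  by_cases hj : j = ⟨1, hw⟩
  · simp [mtC, hj]
  · have hj' : (j : ℕ) ≠ 1 := fun h => hj (Fin.ext h)
    simp [mtC, hj, hj']

theorem vecMul_mtQ [NeZero w] {n : ℕ} (hn : n < w) (v : Fin w → ZMod 2) :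
    v ᵥ* mtQ w a n = ∑ i ∈ range n, Pi.single ⟨n - i, by omega⟩ ((v ᵥ* mtB w a ^ i) 0) := by
  rw [mtQ, vecMul_sum]
  refine sum_congr rfl fun i hi => ?_
  have hi := mem_range.mp hi
  rw [← vecMul_vecMul, ← vecMul_vecMul, vecMul_mtC (by omega), single_vecMul, row,
    mtB_pow_row_eq_single le_rfl (by omega), ← Pi.single_smul', smul_eq_mul, mul_one]
  congr 1
  simp only [Fin.mk.injEq]
  omega

theorem vecMul_mtQ_apply [NeZero w] {n : ℕ} (hn : n < w) (v : Fin w → ZMod 2) (j : Fin w) :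
    (v ᵥ* mtQ w a n) j =
      if 1 ≤ (j : ℕ) ∧ (j : ℕ) ≤ n then (v ᵥ* mtB w a ^ (n - j)) 0 else 0 := by
  rw [vecMul_mtQ hn, Finset.sum_apply]
  simp only [Pi.single_apply, Fin.ext_iff]
  split_ifs with hj
  · rw [sum_eq_single (n - j) (fun i hi hij => if_neg (by simp at hi; omega))
      (fun h => absurd (mem_range.mpr (by omega)) h), if_pos (by omega)]
  · exact sum_eq_zero fun i hi => if_neg (by simp at hi; omega)

theorem vecMul_mtQ_eq_zero_iff [NeZero w] {n : ℕ} (hn : n < w) (v : Fin w → ZMod 2) :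
    v ᵥ* mtQ w a n = 0 ↔ ∀ m < n, (v ᵥ* mtB w a ^ m) 0 = 0 := by
  simp only [funext_iff, vecMul_mtQ_apply hn, Pi.zero_apply]
  constructor
  · intro h m hm
    simpa [show n - (n - m) = m by omega, show 1 ≤ n - m by omega] using h ⟨n - m, by omega⟩
  · intro h j
    split_ifs with hj
    · exact h _ (by omega)
    · rfl

theorem mtQ_add (m n : ℕ) :
    mtQ w a (m + n) = mtQ w a m * mtB w a ^ n + mtB w a ^ m * mtQ w a n :=
  sum_range_pow_mul_mul_pow_add _ _ m n

theorem vecMul_mtB_pow_add_vecMul_mtQ_two_mul (u v : Fin w → ZMod 2) (N : ℕ) :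
    u ᵥ* mtB w a ^ (2 * N) + v ᵥ* mtQ w a (2 * N) =
      (u ᵥ* mtB w a ^ N + v ᵥ* mtQ w a N) ᵥ* mtB w a ^ N + (v ᵥ* mtB w a ^ N) ᵥ* mtQ w a N := by
  simp only [two_mul, mtQ_add, pow_add, vecMul_add, add_vecMul, vecMul_vecMul]
  abel

theorem vecMul_mtB_pow_two_mul_add_eq_zero_iff [NeZero w] {N : ℕ} (hN : N < w)
    {u v : Fin w → ZMod 2} (h : u ᵥ* mtB w a ^ N + v ᵥ* mtQ w a N = 0) :
    u ᵥ* mtB w a ^ (2 * N) + v ᵥ* mtQ w a (2 * N) = 0 ↔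
      ∀ m, N ≤ m → m < 2 * N → (v ᵥ* mtB w a ^ m) 0 = 0 := by
  rw [vecMul_mtB_pow_add_vecMul_mtQ_two_mul, h, zero_vecMul, zero_add, vecMul_mtQ_eq_zero_iff hN]
  simp only [vecMul_vecMul, ← pow_add]
  constructor
  · intro H m h1 h2
    simpa [show N + (m - N) = m by omega] using H (m - N) (by omega)
  · exact fun H m hm => H _ (by omega) (by omega)

theorem vecMul_two_pow_system_iff [NeZero w] {s t : ℕ} (hst : s ≤ t) (ht : 2 ^ t ≤ w)
    (u v : Fin w → ZMod 2) :
    (∀ k, s ≤ k → k ≤ t → u ᵥ* mtB w a ^ 2 ^ k + v ᵥ* mtQ w a (2 ^ k) = 0) ↔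
      u ᵥ* mtB w a ^ 2 ^ s + v ᵥ* mtQ w a (2 ^ s) = 0 ∧
        ∀ m, 2 ^ s ≤ m → m < 2 ^ t → (v ᵥ* mtB w a ^ m) 0 = 0 :=
  forall_le_le_iff_of_step (pow_right_mono₀ one_le_two) hst fun k _ hkt hk => by
    rw [pow_succ', vecMul_mtB_pow_two_mul_add_eq_zero_iff
      ((Nat.pow_lt_pow_right one_lt_two hkt).trans_le ht) hk]

theorem exists_vecMul_mtB_pow_apply_zero_eq [NeZero w] (ha : a 0 = 1) {T : ℕ} (hT : T ≤ w)
    (φ : ℕ → ZMod 2) : ∃ v : Fin w → ZMod 2, ∀ m < T, (v ᵥ* mtB w a ^ m) 0 = φ m := by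
  let L : (Fin w → ZMod 2) →ₗ[ZMod 2] ℕ → ZMod 2 :=
    LinearMap.pi fun m => LinearMap.proj 0 ∘ₗ (mtB w a ^ m).vecMulLinear
  have hL (x : Fin w → ZMod 2) (m : ℕ) : L x m = (x ᵥ* mtB w a ^ m) 0 := rfl
  refine exists_forall_lt_apply_eq_of_triangular L T (fun m hm => ?_) φ
  rcases Nat.eq_zero_or_pos m with rfl | hm0
  · exact ⟨Pi.single 0 1, by simp [hL], fun k hk => absurd hk (Nat.not_lt_zero k)⟩
  have hw0 (c : ℕ) (hc : c < w) (h0 : c ≠ 0) : (Pi.single ⟨c, hc⟩ 1 : Fin w → ZMod 2) 0 = 0 := by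
    rw [Pi.single_apply, if_neg (by simp [Fin.ext_iff]; omega)]
  refine ⟨Pi.single ⟨w - m, by omega⟩ 1, ?_, fun k hk => ?_⟩
  · rw [hL, single_one_vecMul, row, mtB_pow_row_sub hm0 (by omega), ha]
  rcases Nat.eq_zero_or_pos k with rfl | hk0
  · rw [hL, pow_zero, vecMul_one, hw0 _ _ (by omega)]
  · rw [hL, single_one_vecMul, row, mtB_pow_row_eq_single (by omega) (by omega),
      hw0 _ _ (by omega)]

theorem exists_vecMul_mtB_pow_eq [NeZero w] (ha : a 0 = 1) {n : ℕ} (hn : 1 ≤ n) (hnw : n < w)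
    (y : Fin w → ZMod 2) : ∃ u : Fin w → ZMod 2,
      (u ᵥ* mtB w a ^ n) 0 = y 0 ∧ ∀ j : Fin w, n < (j : ℕ) → (u ᵥ* mtB w a ^ n) j = y j := by
  set z := y - y 0 • a
  set S := univ.filter fun j : Fin w => n < (j : ℕ)
  have key : (y 0 • Pi.single ⟨w - n, by omega⟩ 1 +
      ∑ j ∈ S, z j • Pi.single ⟨j - n, by omega⟩ 1) ᵥ* mtB w a ^ n =
        y 0 • a + ∑ j ∈ S, Pi.single j (z j) := by
    rw [add_vecMul, smul_vecMul, single_one_vecMul, row, mtB_pow_row_sub hn hnw, sum_vecMul]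
    congr 1
    refine sum_congr rfl fun j hj => ?_
    have hj : n < (j : ℕ) := (mem_filter.mp hj).2
    rw [smul_vecMul, single_one_vecMul, row, mtB_pow_row_eq_single (by omega) (by omega),
      ← Pi.single_smul', smul_eq_mul, mul_one]
    congr 1
    ext
    simp only
    omega
  exact ⟨_, by rw [key]; simp [S, ha], fun j hj => by rw [key]; simp [S, hj, z]⟩

def mtSyndrome (w : ℕ) [NeZero w] (a : Fin w → ZMod 2) (n d : ℕ) :
    (Fin w → ZMod 2) × (Fin w → ZMod 2) →ₗ[ZMod 2] (Fin w → ZMod 2) × (Fin d → ZMod 2) :=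
  ((mtB w a ^ n).vecMulLinear ∘ₗ LinearMap.fst _ _ _ +
      (mtQ w a n).vecMulLinear ∘ₗ LinearMap.snd _ _ _).prod
    (LinearMap.pi fun i : Fin d =>
      LinearMap.proj 0 ∘ₗ (mtB w a ^ (n + (i : ℕ))).vecMulLinear ∘ₗ LinearMap.snd _ _ _)

theorem mtSyndrome_apply [NeZero w] (n d : ℕ) (p : (Fin w → ZMod 2) × (Fin w → ZMod 2)) :
    mtSyndrome w a n d p =
      (p.1 ᵥ* mtB w a ^ n + p.2 ᵥ* mtQ w a n,
        fun i : Fin d => (p.2 ᵥ* mtB w a ^ (n + (i : ℕ))) 0) :=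
  rfl

theorem mem_ker_mtSyndrome_iff [NeZero w] (n d : ℕ) (p : (Fin w → ZMod 2) × (Fin w → ZMod 2)) :
    p ∈ LinearMap.ker (mtSyndrome w a n d) ↔ p.1 ᵥ* mtB w a ^ n + p.2 ᵥ* mtQ w a n = 0 ∧
      ∀ m, n ≤ m → m < n + d → (p.2 ᵥ* mtB w a ^ m) 0 = 0 := by
  rw [LinearMap.mem_ker, mtSyndrome_apply, Prod.ext_iff, funext_iff (f := fun i : Fin d => _)]
  refine and_congr_right fun _ => ⟨fun h m h1 h2 => ?_, fun h i => h _ (by omega) (by omega)⟩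
  simpa [show n + (m - n) = m by omega] using h ⟨m - n, by omega⟩

theorem mtSyndrome_surjective [NeZero w] (ha : a 0 = 1) {n d : ℕ} (hn : 1 ≤ n) (hnw : n < w)
    (hndw : n + d ≤ w) : Function.Surjective (mtSyndrome w a n d) := by
  rintro ⟨y, b⟩
  obtain ⟨u, hu0, hu⟩ := exists_vecMul_mtB_pow_eq ha hn hnw y
  obtain ⟨v, hv⟩ := exists_vecMul_mtB_pow_apply_zero_eq ha hndw fun m =>
    if h : m < n then y ⟨n - m, by omega⟩ - (u ᵥ* mtB w a ^ n) ⟨n - m, by omega⟩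
    else if h' : m - n < d then b ⟨m - n, h'⟩ else 0
  refine ⟨(u, v), Prod.ext (funext fun j => ?_) (funext fun i => ?_)⟩
  · change (u ᵥ* mtB w a ^ n + v ᵥ* mtQ w a n) j = y j
    rw [Pi.add_apply, vecMul_mtQ_apply hnw]
    split_ifs with hj
    · rw [hv _ (by omega), dif_pos (by omega)]
      simp only [show n - (n - (j : ℕ)) = j by omega, Fin.eta]
      ring
    · rw [add_zero]
      rcases Nat.eq_zero_or_pos j with hj0 | hj0
      · rw [show j = 0 from Fin.ext hj0, hu0]
      · exact hu j (by omega)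
  · change (v ᵥ* mtB w a ^ (n + (i : ℕ))) 0 = b i
    rw [hv _ (by omega), dif_neg (by omega), dif_pos (by omega)]
    simp

end

/-- the number of pairs `(u, v)` of row vectors satisfying
`u·B^{2^k} + v·Q_{2^k} = 0` for all `s ≤ k ≤ t` is `2^{w - (2^t - 2^s)}`. -/
theorem stmt13 (w : ℕ) (hw : 4 ≤ w) (a : Fin w → ZMod 2) (ha : a ⟨0, by omega⟩ = 1)
    (s t : ℕ) (hst : s < t) (ht : 2 ^ t ≤ w - 2) :
    Nat.card {p : (Fin w → ZMod 2) × (Fin w → ZMod 2) //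
      ∀ k : ℕ, s ≤ k → k ≤ t →
        p.1 ᵥ* (mtB w a) ^ (2 ^ k) + p.2 ᵥ* mtQ w a (2 ^ k) = 0}
    = 2 ^ (w - (2 ^ t - 2 ^ s)) := by
  have : NeZero w := ⟨by omega⟩
  have hpow : 2 ^ s < 2 ^ t := Nat.pow_lt_pow_right one_lt_two hst
  have hsum : 2 ^ s + (2 ^ t - 2 ^ s) = 2 ^ t := by omega
  have hker (p : (Fin w → ZMod 2) × (Fin w → ZMod 2)) :
      (∀ k : ℕ, s ≤ k → k ≤ t → p.1 ᵥ* (mtB w a) ^ (2 ^ k) + p.2 ᵥ* mtQ w a (2 ^ k) = 0) ↔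
        p ∈ LinearMap.ker (mtSyndrome w a (2 ^ s) (2 ^ t - 2 ^ s)) := by
    rw [vecMul_two_pow_system_iff hst.le (by omega), mem_ker_mtSyndrome_iff, hsum]
  rw [Nat.card_congr (Equiv.subtypeEquivRight hker), LinearMap.natCard_ker_of_surjective _
    (mtSyndrome_surjective ha Nat.one_le_two_pow (by omega) (by omega))]
  simp only [ZMod.card, Module.finrank_prod, Module.finrank_fin_fun]
  congr 1
  omega
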